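/- If T is an invertible (2k+1)×(2k+1) matrix over a field F and the public map is defined by P := T · Y where Y = (Y_1,…,Y_{2k+1})ᵀ is the vector of coefficient sums, then T can be recovered from P: the entry t_{i,ℓ} equals the coefficient in P_i of the monomial y_a y_b, where (a,b) ∈ I_ℓ is the representative (1, k+1+ℓ) when ℓ ≤ k+1 and (ℓ−k, 2k+2) when ℓ > k+1. -/
import Mathlib


def indexSet (k m : ℕ) : Finset (ℕ × ℕ) :=
  (Finset.Icc 1 (k + 1) ×ˢ Finset.Icc (k + 2) (2 * k + 2)).filter
    (fun p => p.1 + p.2 = m + k + 2)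

noncomputable def coeffSum (F : Type*) [Field F] (k m : ℕ) : MvPolynomial ℕ F :=
  ∑ p ∈ indexSet k m, MvPolynomial.X p.1 * MvPolynomial.X p.2

lemma pair_eq {a b c e : ℕ} (hab : a < b) (hce : c < e) :
    (Finsupp.single a 1 + Finsupp.single b 1 : ℕ →₀ ℕ) =
      Finsupp.single c 1 + Finsupp.single e 1 ↔ a = c ∧ b = e := by
  constructor
  · intro h
    have h3 := DFunLike.congr_fun h c
    have h4 := DFunLike.congr_fun h e
    simp only [Finsupp.add_apply, Finsupp.single_apply] at h3 h4
    split_ifs at h3 h4 <;> omega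
  · rintro ⟨rfl, rfl⟩; rfl

lemma X_mul_X' {F : Type*} [Field F] (a b : ℕ) :
    (MvPolynomial.X a * MvPolynomial.X b : MvPolynomial ℕ F) =
      MvPolynomial.monomial (Finsupp.single a 1 + Finsupp.single b 1) 1 := by
  rw [MvPolynomial.X, MvPolynomial.X, MvPolynomial.monomial_mul, mul_one]

lemma coeff_coeffSum {F : Type*} [Field F] (k : ℕ) (ℓ : Fin (2 * k + 1)) (m : ℕ) :
    MvPolynomial.coeff
        (if ℓ.val + 1 ≤ k + 1 then
          Finsupp.single 1 1 + Finsupp.single (k + 1 + (ℓ.val + 1)) 1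
        else
          Finsupp.single (ℓ.val + 1 - k) 1 + Finsupp.single (2 * k + 2) 1)
        (coeffSum F k m) = if m = ℓ.val + 1 then 1 else 0 := by
  have hℓ := ℓ.isLt
  set p₀ : ℕ × ℕ := if ℓ.val + 1 ≤ k + 1 then (1, k + 1 + (ℓ.val + 1))
    else (ℓ.val + 1 - k, 2 * k + 2) with hp₀
  have hd : (if ℓ.val + 1 ≤ k + 1 then
          Finsupp.single 1 1 + Finsupp.single (k + 1 + (ℓ.val + 1)) 1
        else
          Finsupp.single (ℓ.val + 1 - k) 1 + Finsupp.single (2 * k + 2) (1:ℕ))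
      = Finsupp.single p₀.1 1 + Finsupp.single p₀.2 1 := by
    rw [hp₀]; split_ifs <;> rfl
  have hlt : p₀.1 < p₀.2 := by rw [hp₀]; split_ifs <;> simp <;> omega
  rw [hd]
  unfold coeffSum
  rw [MvPolynomial.coeff_sum]
  have step : ∀ p ∈ indexSet k m,
      MvPolynomial.coeff (Finsupp.single p₀.1 1 + Finsupp.single p₀.2 1)
        (MvPolynomial.X p.1 * MvPolynomial.X p.2 : MvPolynomial ℕ F)
      = if p = p₀ then 1 else 0 := by
    intro p hp
    rw [X_mul_X', MvPolynomial.coeff_monomial]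
    simp only [indexSet, Finset.mem_filter, Finset.mem_product, Finset.mem_Icc] at hp
    have hplt : p.1 < p.2 := by omega
    by_cases hpe : p = p₀
    · rw [if_pos (by rw [hpe]), if_pos hpe]
    · rw [if_neg, if_neg hpe]
      intro hc
      exact hpe (Prod.ext ((pair_eq hplt hlt).mp hc).1 ((pair_eq hplt hlt).mp hc).2)
  rw [Finset.sum_congr rfl step, Finset.sum_ite_eq' (indexSet k m) p₀ (fun _ => (1:F))]
  have hmem : p₀ ∈ indexSet k m ↔ m = ℓ.val + 1 := by
    simp only [indexSet, Finset.mem_filter, Finset.mem_product, Finset.mem_Icc, hp₀]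
    split_ifs <;> simp <;> omega
  rcases eq_or_ne m (ℓ.val + 1) with h | h
  · rw [if_pos (hmem.mpr h), if_pos h]
  · rw [if_neg (fun hc => h (hmem.mp hc)), if_neg h]

theorem read_off_matrix {F : Type*} [Field F] (k : ℕ) (T : GL (Fin (2 * k + 1)) F)
    (P : Fin (2 * k + 1) → MvPolynomial ℕ F)
    (hP : ∀ i, P i = ∑ ℓ : Fin (2 * k + 1),
      MvPolynomial.C ((T : Matrix (Fin (2 * k + 1)) (Fin (2 * k + 1)) F) i ℓ) *
        coeffSum F k (ℓ.val + 1))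
    (i ℓ : Fin (2 * k + 1)) :
    MvPolynomial.coeff
        (if ℓ.val + 1 ≤ k + 1 then
          Finsupp.single 1 1 + Finsupp.single (k + 1 + (ℓ.val + 1)) 1
        else
          Finsupp.single (ℓ.val + 1 - k) 1 + Finsupp.single (2 * k + 2) 1)
        (P i) =
      (T : Matrix (Fin (2 * k + 1)) (Fin (2 * k + 1)) F) i ℓ := by
  rw [hP, MvPolynomial.coeff_sum]
  have : ∀ ℓ' : Fin (2 * k + 1),
      MvPolynomial.coeff
        (if ℓ.val + 1 ≤ k + 1 then
          Finsupp.single 1 1 + Finsupp.single (k + 1 + (ℓ.val + 1)) 1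
        else
          Finsupp.single (ℓ.val + 1 - k) 1 + Finsupp.single (2 * k + 2) 1)
        (MvPolynomial.C ((T : Matrix (Fin (2 * k + 1)) (Fin (2 * k + 1)) F) i ℓ') *
          coeffSum F k (ℓ'.val + 1))
      = if ℓ' = ℓ then (T : Matrix (Fin (2 * k + 1)) (Fin (2 * k + 1)) F) i ℓ else 0 := by
    intro ℓ'
    rw [MvPolynomial.coeff_C_mul, coeff_coeffSum]
    by_cases h : ℓ' = ℓ
    · rw [if_pos (by rw [h]), if_pos h, h, mul_one]
    · rw [if_neg (fun hc => h (Fin.ext (by omega))), if_neg h, mul_zero]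
  rw [Finset.sum_congr rfl (fun ℓ' _ => this ℓ'), Finset.sum_ite_eq' Finset.univ ℓ]
  simp
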